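/- Let $\phi$ be an N-function with $\Delta_2(\{\phi, \phi^*\}) < \infty$. For $P, Q \in \mathbb{R}^{n \times m}$, write $[P,Q]_s = sP + (1-s)Q$. Then $\int_0^1 \frac{\phi'(|[P,Q]_s|)}{|[P,Q]_s|}\,ds \sim \frac{\phi'(|P|+|Q|)}{|P|+|Q|}$, with constants depending only on the $\Delta_2$ constants, for all $P, Q$ not both zero. -/

import Mathlib

open MeasureTheory Filter

structure IsNFunctionDeriv (φ' : ℝ → ℝ) : Prop where
  mono : MonotoneOn φ' (Set.Ici 0)
  left_cont : ∀ t > (0 : ℝ), Tendsto φ' (nhdsWithin t (Set.Iio t)) (nhds (φ' t))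
  zero : φ' 0 = 0
  pos : ∀ t > (0 : ℝ), 0 < φ' t
  tendsto_top : Tendsto φ' atTop atTop

noncomputable def phiOf (φ' : ℝ → ℝ) (t : ℝ) : ℝ := ∫ s in (0 : ℝ)..t, φ' s

noncomputable def phiInvDeriv (φ' : ℝ → ℝ) (t : ℝ) : ℝ :=
  sInf {s : ℝ | 0 ≤ s ∧ t < φ' s}

noncomputable def phiConj (φ' : ℝ → ℝ) (t : ℝ) : ℝ :=
  ∫ s in (0 : ℝ)..t, phiInvDeriv φ' s

/-!
`Δ₂(φ*)` makes `phiInvDeriv φ'` doubling with some constant `K ≥ 2`, which forces the decay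
`φ' r ≤ 4 (r / a) ^ δ φ' a` for `0 < r ≤ a`, with `δ = log_K 2 ∈ (0, 1]`. Along the segment,
`‖[P,Q]_s‖ ≥ (‖P‖ + ‖Q‖) / 4 · |s - c|` for a point `c` minimising the norm, so the integrand is
dominated by `φ'(a) / a · |s - c| ^ (δ - 1)` with `a = ‖P‖ + ‖Q‖`, which is integrable on `[0, 1]`.
Conversely `‖[P,Q]_s‖ ≥ a / 4` on a quarter of `[0, 1]` next to the longer of `P`, `Q`, and
`Δ₂(φ)` makes `φ'` doubling, so that `φ' (a / 4) ≳ φ' a`.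
-/

open Set intervalIntegral

section Doubling

variable {f : ℝ → ℝ}

theorem intervalIntegrable_of_monotoneOn_Ici (hf : MonotoneOn f (Ici 0)) {x y : ℝ}
    (hx : 0 ≤ x) (hy : 0 ≤ y) : IntervalIntegrable f volume x y :=
  (hf.mono fun _ hz => (le_min hx hy).trans hz.1).intervalIntegrable

theorem integral_le_mul_of_monotoneOn (hf : MonotoneOn f (Ici 0)) {t : ℝ} (ht : 0 ≤ t) :
    ∫ s in (0 : ℝ)..t, f s ≤ t * f t := by
  simpa using integral_mono_on ht (intervalIntegrable_of_monotoneOn_Ici hf le_rfl ht)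
    intervalIntegrable_const fun x hx => hf hx.1 ht hx.2

theorem mul_le_integral_two_mul_of_monotoneOn (hf : MonotoneOn f (Ici 0))
    (hnn : ∀ s, 0 ≤ s → 0 ≤ f s) {t : ℝ} (ht : 0 ≤ t) :
    t * f t ≤ ∫ s in (0 : ℝ)..2 * t, f s := by
  have h2t : 0 ≤ 2 * t := by linarith
  rw [← integral_add_adjacent_intervals (intervalIntegrable_of_monotoneOn_Ici hf le_rfl ht)
    (intervalIntegrable_of_monotoneOn_Ici hf ht h2t)]
  have hfirst : 0 ≤ ∫ s in (0 : ℝ)..t, f s := integral_nonneg ht fun u hu => hnn u hu.1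
  have hsecond : (2 * t - t) * f t ≤ ∫ s in t..2 * t, f s := by
    simpa using integral_mono_on (by linarith) intervalIntegrable_const
      (intervalIntegrable_of_monotoneOn_Ici hf ht h2t) fun x hx => hf ht (ht.trans hx.1) hx.1
  linarith

theorem apply_two_mul_le_of_integral_doubling (hf : MonotoneOn f (Ici 0))
    (hnn : ∀ s, 0 ≤ s → 0 ≤ f s) {c : ℝ}
    (hc : ∀ t ≥ (0 : ℝ), ∫ s in (0 : ℝ)..2 * t, f s ≤ c * ∫ s in (0 : ℝ)..t, f s)
    {t : ℝ} (ht : 0 < t) : f (2 * t) ≤ c ^ 2 / 2 * f t := by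
  have h4t := mul_le_integral_two_mul_of_monotoneOn hf hnn (t := 2 * t) (by linarith)
  have h2t := hc (2 * t) (by linarith)
  rcases le_or_gt 0 c with hc0 | hc0
  · have h1t : ∫ s in (0 : ℝ)..2 * t, f s ≤ c * (t * f t) :=
      (hc t ht.le).trans (mul_le_mul_of_nonneg_left (integral_le_mul_of_monotoneOn hf ht.le) hc0)
    have : 2 * t * f (2 * t) ≤ c ^ 2 * (t * f t) :=
      calc 2 * t * f (2 * t) ≤ c * ∫ s in (0 : ℝ)..2 * t, f s := h4t.trans h2t
      _ ≤ c * (c * (t * f t)) := mul_le_mul_of_nonneg_left h1t hc0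
      _ = c ^ 2 * (t * f t) := by ring
    nlinarith
  · have hI : 0 ≤ ∫ s in (0 : ℝ)..2 * t, f s :=
      integral_nonneg (by linarith) fun u hu => hnn u hu.1
    have : 2 * t * f (2 * t) ≤ 0 :=
      h4t.trans (h2t.trans (mul_nonpos_of_nonpos_of_nonneg hc0.le hI))
    have : f (2 * t) ≤ 0 := by nlinarith
    exact this.trans (mul_nonneg (by positivity) (hnn t ht.le))

theorem pow_mul_le_of_doubling {K : ℝ} (hK : 0 ≤ K)
    (hf : ∀ u > 0, f (2 * u) ≤ K * f u) (j : ℕ) {u : ℝ} (hu : 0 < u) :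
    f (2 ^ j * u) ≤ K ^ j * f u := by
  induction j with
  | zero => simp
  | succ j ih =>
    calc f (2 ^ (j + 1) * u) = f (2 * (2 ^ j * u)) := by ring_nf
    _ ≤ K * f (2 ^ j * u) := hf _ (by positivity)
    _ ≤ K * (K ^ j * f u) := by gcongr
    _ = K ^ (j + 1) * f u := by ring

end Doubling

theorem phiInvDeriv_nonneg (φ' : ℝ → ℝ) (u : ℝ) : 0 ≤ phiInvDeriv φ' u :=
  Real.sInf_nonneg fun _ hs => hs.1

namespace IsNFunctionDeriv

variable {φ' : ℝ → ℝ}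

theorem nonneg (hN : IsNFunctionDeriv φ') {t : ℝ} (ht : 0 ≤ t) : 0 ≤ φ' t := by
  rcases ht.eq_or_lt with rfl | ht
  · exact hN.zero.ge
  · exact (hN.pos t ht).le

theorem apply_two_mul_le (hN : IsNFunctionDeriv φ') {cφ : ℝ}
    (hΔ2 : ∀ t ≥ (0 : ℝ), phiOf φ' (2 * t) ≤ cφ * phiOf φ' t) {t : ℝ} (ht : 0 < t) :
    φ' (2 * t) ≤ cφ ^ 2 / 2 * φ' t :=
  apply_two_mul_le_of_integral_doubling hN.mono (fun _ => hN.nonneg) hΔ2 ht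

theorem exists_lt_apply (hN : IsNFunctionDeriv φ') (u : ℝ) : ∃ s, 0 ≤ s ∧ u < φ' s := by
  obtain ⟨N, hN⟩ := eventually_atTop.1 (hN.tendsto_top.eventually_gt_atTop u)
  exact ⟨max N 0, le_max_right _ _, hN _ (le_max_left _ _)⟩

theorem monotone_phiInvDeriv (hN : IsNFunctionDeriv φ') : Monotone (phiInvDeriv φ') :=
  fun _ v huv => csInf_le_csInf ⟨0, fun _ hs => hs.1⟩ (hN.exists_lt_apply v)
    fun _ hs => ⟨hs.1, huv.trans_lt hs.2⟩

theorem le_phiInvDeriv (hN : IsNFunctionDeriv φ') {t u : ℝ} (ht : 0 ≤ t) (htu : φ' t < u) :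
    t ≤ phiInvDeriv φ' u :=
  le_csInf (hN.exists_lt_apply u) fun _ hs =>
    le_of_not_gt fun hst => (hN.mono hs.1 ht hst.le).not_gt (htu.trans hs.2)

theorem apply_phiInvDeriv_le (hN : IsNFunctionDeriv φ') {u : ℝ} (hu : 0 ≤ u) :
    φ' (phiInvDeriv φ' u) ≤ u := by
  rcases (phiInvDeriv_nonneg φ' u).eq_or_lt with h | h
  · rw [← h, hN.zero]
    exact hu
  · refine le_of_tendsto (hN.left_cont _ h) ?_
    filter_upwards [self_mem_nhdsWithin, mem_nhdsWithin_of_mem_nhds (Ioi_mem_nhds h)]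
      with s hs hs0
    exact le_of_not_gt fun hus =>
      (csInf_le ⟨0, fun _ hx => hx.1⟩ ⟨le_of_lt hs0, hus⟩ : phiInvDeriv φ' u ≤ s).not_gt hs

theorem phiInvDeriv_two_mul_le (hN : IsNFunctionDeriv φ') {cψ : ℝ}
    (hΔ2conj : ∀ t ≥ (0 : ℝ), phiConj φ' (2 * t) ≤ cψ * phiConj φ' t) {u : ℝ} (hu : 0 < u) :
    phiInvDeriv φ' (2 * u) ≤ cψ ^ 2 / 2 * phiInvDeriv φ' u :=
  apply_two_mul_le_of_integral_doubling (hN.monotone_phiInvDeriv.monotoneOn _)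
    (fun s _ => phiInvDeriv_nonneg φ' s) hΔ2conj hu

theorem apply_div_pow_le (hN : IsNFunctionDeriv φ') {K : ℝ} (hK : 0 < K)
    (hd : ∀ u > 0, phiInvDeriv φ' (2 * u) ≤ K * phiInvDeriv φ' u) {t : ℝ} (ht : 0 < t)
    (j : ℕ) : φ' (t / K ^ j) ≤ 2 * φ' t / 2 ^ j := by
  have hφt := hN.pos t ht
  set u := 2 * φ' t / 2 ^ j
  have hu : 0 < u := by positivity
  have htu : t ≤ K ^ j * phiInvDeriv φ' u :=
    calc t ≤ phiInvDeriv φ' (2 * φ' t) := hN.le_phiInvDeriv ht.le (by linarith)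
    _ = phiInvDeriv φ' (2 ^ j * u) := by rw [mul_div_cancel₀ _ (by positivity)]
    _ ≤ K ^ j * phiInvDeriv φ' u := pow_mul_le_of_doubling hK.le hd j hu
  calc φ' (t / K ^ j) ≤ φ' (phiInvDeriv φ' u) :=
        hN.mono (show 0 ≤ t / K ^ j by positivity) (phiInvDeriv_nonneg φ' u)
          (by rwa [div_le_iff₀' (by positivity)])
  _ ≤ u := hN.apply_phiInvDeriv_le hu.le

theorem apply_le_rpow_mul (hN : IsNFunctionDeriv φ') {K : ℝ} (hK : 1 < K)
    (hd : ∀ u > 0, phiInvDeriv φ' (2 * u) ≤ K * phiInvDeriv φ' u) {r a : ℝ} (hr : 0 < r)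
    (hra : r ≤ a) : φ' r ≤ 4 * (r / a) ^ Real.logb K 2 * φ' a := by
  have ha : 0 < a := hr.trans_le hra
  have hδ : 0 ≤ Real.logb K 2 := (Real.logb_pos hK one_lt_two).le
  obtain ⟨j, hjle, hjlt⟩ := exists_nat_pow_near ((one_le_div hr).2 hra) hK
  have hpow : (a / r) ^ Real.logb K 2 ≤ 2 ^ (j + 1) :=
    calc (a / r) ^ Real.logb K 2 ≤ (K ^ (j + 1)) ^ Real.logb K 2 := by gcongr
    _ = 2 ^ (j + 1) := by
      rw [← Real.rpow_pow_comm (by positivity), Real.rpow_logb (by positivity) hK.ne' two_pos]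
  have hφa := hN.nonneg ha.le
  calc φ' r ≤ φ' (a / K ^ j) :=
        hN.mono hr.le (show 0 ≤ a / K ^ j by positivity)
          (by rwa [le_div_iff₀' (by positivity), ← le_div_iff₀ hr])
  _ ≤ 2 * φ' a / 2 ^ j := hN.apply_div_pow_le (by positivity) hd ha j
  _ = 4 * φ' a / 2 ^ (j + 1) := by ring
  _ ≤ 4 * φ' a / (a / r) ^ Real.logb K 2 := by gcongr
  _ = 4 * (r / a) ^ Real.logb K 2 * φ' a := by
    rw [← inv_div r a, Real.inv_rpow (by positivity), div_inv_eq_mul]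
    ring

end IsNFunctionDeriv

section SingularIntegral

variable {r : ℝ}

theorem intervalIntegrable_abs_rpow (hr : -1 < r) (a b : ℝ) :
    IntervalIntegrable (fun x => |x| ^ r) volume a b := by
  have hpos : ∀ c ≥ (0 : ℝ), IntervalIntegrable (fun x => |x| ^ r) volume 0 c := by
    intro c hc
    refine (intervalIntegrable_congr fun x hx => ?_).mp (intervalIntegrable_rpow' hr)
    rw [uIoc_of_le hc] at hx
    simp [abs_of_pos hx.1]
  have hall : ∀ c, IntervalIntegrable (fun x => |x| ^ r) volume 0 c := by
    intro c
    rcases le_total 0 c with hc | hc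
    · exact hpos c hc
    · rw [IntervalIntegrable.iff_comp_neg]
      simpa using hpos (-c) (by linarith)
  exact (hall a).symm.trans (hall b)

theorem intervalIntegrable_abs_sub_rpow (hr : -1 < r) (c a b : ℝ) :
    IntervalIntegrable (fun x => |x - c| ^ r) volume a b := by
  simpa using (intervalIntegrable_abs_rpow hr (a - c) (b - c)).comp_sub_right c

theorem integral_abs_rpow_of_nonneg (hr : -1 < r) {b : ℝ} (hb : 0 ≤ b) :
    ∫ x in (0 : ℝ)..b, |x| ^ r = b ^ (r + 1) / (r + 1) := by
  rw [integral_congr fun x hx => ?_, integral_rpow (Or.inl hr), Real.zero_rpow (by linarith),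
    sub_zero]
  rw [uIcc_of_le hb] at hx
  simp [abs_of_nonneg hx.1]

theorem integral_abs_sub_rpow_le (hr : -1 < r) {c : ℝ} (hc : c ∈ Icc (0 : ℝ) 1) :
    ∫ s in (0 : ℝ)..1, |s - c| ^ r ≤ 2 / (r + 1) := by
  have hbound : ∀ b ∈ Icc (0 : ℝ) 1, ∫ x in (0 : ℝ)..b, |x| ^ r ≤ 1 / (r + 1) := by
    intro b hb
    rw [integral_abs_rpow_of_nonneg hr hb.1]
    gcongr
    · linarith
    · exact Real.rpow_le_one hb.1 hb.2 (by linarith)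
  have hleft : ∫ x in -c..0, |x| ^ r = ∫ x in (0 : ℝ)..c, |x| ^ r := by
    simpa using (integral_comp_neg (a := 0) (b := c) fun x => |x| ^ r).symm
  rw [integral_comp_sub_right (fun x => |x| ^ r), zero_sub,
    ← integral_add_adjacent_intervals (b := 0) (intervalIntegrable_abs_rpow hr _ _)
      (intervalIntegrable_abs_rpow hr _ _), hleft]
  linarith [hbound c hc, hbound (1 - c) ⟨by linarith [hc.2], by linarith [hc.1]⟩,
    (by ring : 2 / (r + 1) = 1 / (r + 1) + 1 / (r + 1))]

end SingularIntegral

section Segment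

variable {E : Type*} [NormedAddCommGroup E] [NormedSpace ℝ E]

theorem norm_segment_le (P Q : E) {s : ℝ} (hs : s ∈ Icc (0 : ℝ) 1) :
    ‖s • P + (1 - s) • Q‖ ≤ ‖P‖ + ‖Q‖ := by
  have h1s : 0 ≤ 1 - s := by linarith [hs.2]
  calc ‖s • P + (1 - s) • Q‖ ≤ s * ‖P‖ + (1 - s) * ‖Q‖ := by
        simpa only [norm_smul_of_nonneg hs.1, norm_smul_of_nonneg h1s] using
          norm_add_le (s • P) ((1 - s) • Q)
  _ ≤ ‖P‖ + ‖Q‖ := by nlinarith [mul_nonneg h1s (norm_nonneg P), mul_nonneg hs.1 (norm_nonneg Q)]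

/-- With `x s = s • P + (1 - s) • Q` and `c` minimising `‖x‖` on `[0, 1]`:
`‖P‖ + ‖Q‖ ≤ 2 ‖x c‖ + ‖P - Q‖`, while `‖x s‖ ≥ ‖x c‖` and `‖x s‖ ≥ |s - c| ‖P - Q‖ - ‖x c‖`. -/
theorem exists_mul_abs_sub_le_norm_segment (P Q : E) :
    ∃ c ∈ Icc (0 : ℝ) 1, ∀ s ∈ Icc (0 : ℝ) 1,
      (‖P‖ + ‖Q‖) / 4 * |s - c| ≤ ‖s • P + (1 - s) • Q‖ := by
  set x : ℝ → E := fun s => s • P + (1 - s) • Q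
  obtain ⟨c, hc, hmin⟩ := isCompact_Icc.exists_isMinOn (nonempty_Icc.2 zero_le_one)
    (show Continuous x by fun_prop).norm.continuousOn
  refine ⟨c, hc, fun s hs => ?_⟩
  have hdist : ∀ t, ‖x t - x c‖ = |t - c| * ‖P - Q‖ := fun t => by
    rw [show x t - x c = (t - c) • (P - Q) by simp only [x]; module, norm_smul,
      Real.norm_eq_abs]
  have hP : ‖P‖ ≤ ‖x c‖ + (1 - c) * ‖P - Q‖ := by
    have := norm_sub_norm_le (x 1) (x c)
    rw [hdist, abs_of_nonneg (by linarith [hc.2])] at this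
    simp only [x, one_smul, sub_self, zero_smul, add_zero] at this
    linarith
  have hQ : ‖Q‖ ≤ ‖x c‖ + c * ‖P - Q‖ := by
    have := norm_sub_norm_le (x 0) (x c)
    rw [hdist, zero_sub, abs_neg, abs_of_nonneg hc.1] at this
    simp only [x, zero_smul, sub_zero, one_smul, zero_add] at this
    linarith
  have hmin_s : ‖x c‖ ≤ ‖x s‖ := hmin hs
  have hfar : |s - c| * ‖P - Q‖ ≤ ‖x s‖ + ‖x c‖ := hdist s ▸ norm_sub_le _ _
  have hsc : |s - c| ≤ 1 := abs_sub_le_iff.2 ⟨by linarith [hs.2, hc.1], by linarith [hs.1, hc.2]⟩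
  nlinarith [abs_nonneg (s - c), norm_nonneg (x c), norm_nonneg (P - Q),
    mul_nonneg (sub_nonneg.2 hsc) (norm_nonneg (x c))]

theorem quarter_le_norm_segment_of_norm_le {P Q : E} (hQP : ‖Q‖ ≤ ‖P‖) {s : ℝ}
    (hs : s ∈ Icc (3 / 4 : ℝ) 1) : (‖P‖ + ‖Q‖) / 4 ≤ ‖s • P + (1 - s) • Q‖ := by
  have h1s : 0 ≤ 1 - s := by linarith [hs.2]
  have h := norm_sub_le (s • P + (1 - s) • Q) ((1 - s) • Q)
  rw [add_sub_cancel_right, norm_smul_of_nonneg (by linarith [hs.1]),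
    norm_smul_of_nonneg h1s] at h
  nlinarith [norm_nonneg P, norm_nonneg Q, hs.1]

theorem exists_Icc_quarter_le_norm_segment (P Q : E) :
    ∃ u ∈ Icc (0 : ℝ) (3 / 4), ∀ s ∈ Icc u (u + 1 / 4),
      (‖P‖ + ‖Q‖) / 4 ≤ ‖s • P + (1 - s) • Q‖ := by
  rcases le_total ‖Q‖ ‖P‖ with h | h
  · refine ⟨3 / 4, by norm_num, fun s hs => quarter_le_norm_segment_of_norm_le h ?_⟩
    norm_num at hs
    exact hs
  · refine ⟨0, by norm_num, fun s hs => ?_⟩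
    have := quarter_le_norm_segment_of_norm_le h (s := 1 - s)
      ⟨by linarith [hs.2], by linarith [hs.1]⟩
    rwa [add_comm ‖Q‖ ‖P‖, sub_sub_cancel, add_comm ((1 - s) • Q)] at this

end Segment

theorem MonotoneOn.measurable_comp_of_nonneg {α : Type*} [MeasurableSpace α] {g : ℝ → ℝ}
    {R : α → ℝ} (hg : MonotoneOn g (Ici 0)) (hR : Measurable R) (hR0 : ∀ s, 0 ≤ R s) :
    Measurable fun s => g (R s) := by
  have hmono : Monotone fun t => g (max t 0) := fun x y hxy =>
    hg (le_max_right x 0) (le_max_right y 0) (max_le_max hxy le_rfl)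
  have hcomp : (fun s => g (R s)) = (fun t => g (max t 0)) ∘ R :=
    funext fun s => by simp [max_eq_left (hR0 s)]
  exact hcomp ▸ hmono.measurable.comp hR

theorem div_le_mul_rpow_of_le_rpow_mul {g : ℝ → ℝ} {C δ a r : ℝ} (ha : 0 < a) (hr : 0 < r)
    (hgr : g r ≤ C * (r / a) ^ δ * g a) : g r / r ≤ C * (g a / a) * (r / a) ^ (δ - 1) := by
  calc g r / r ≤ C * (r / a) ^ δ * g a / r := by gcongr
  _ = C * (g a / a) * (r / a) ^ (δ - 1) := by
    rw [Real.rpow_sub_one (by positivity)]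
    field_simp

theorem rpow_sub_one_div_four_le {x δ : ℝ} (hx : 0 ≤ x) (hδ : 0 ≤ δ) :
    (x / 4) ^ (δ - 1) ≤ 4 * x ^ (δ - 1) := by
  have h4 : 1 ≤ 4 * (4 : ℝ) ^ (δ - 1) := by
    rw [Real.rpow_sub_one (by norm_num), mul_div_cancel₀ _ (by norm_num)]
    exact Real.one_le_rpow (by norm_num) hδ
  rw [Real.div_rpow hx (by norm_num), div_le_iff₀ (by positivity)]
  nlinarith [Real.rpow_nonneg hx (δ - 1)]

section SegmentAverage

variable {E : Type*} [NormedAddCommGroup E] [NormedSpace ℝ E] {g : ℝ → ℝ} {C δ : ℝ}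

theorem exists_ae_segment_le_abs_sub_rpow (hnn : ∀ t, 0 ≤ t → 0 ≤ g t) (hC : 0 ≤ C)
    (hδ0 : 0 ≤ δ) (hδ1 : δ ≤ 1)
    (hgrowth : ∀ r a, 0 < r → r ≤ a → g r ≤ C * (r / a) ^ δ * g a) (P Q : E)
    (ha : 0 < ‖P‖ + ‖Q‖) :
    ∃ c ∈ Icc (0 : ℝ) 1, ∀ᵐ s, s ∈ Icc (0 : ℝ) 1 →
      g ‖s • P + (1 - s) • Q‖ / ‖s • P + (1 - s) • Q‖ ≤
        4 * C * (g (‖P‖ + ‖Q‖) / (‖P‖ + ‖Q‖)) * |s - c| ^ (δ - 1) := by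
  set a := ‖P‖ + ‖Q‖
  obtain ⟨c, hc, hlow⟩ := exists_mul_abs_sub_le_norm_segment P Q
  refine ⟨c, hc, ?_⟩
  filter_upwards [compl_mem_ae_iff.2 (measure_singleton c)] with s (hsc : s ≠ c) hs
  set R := ‖s • P + (1 - s) • Q‖
  have hsc' : 0 < |s - c| := abs_pos.2 (sub_ne_zero.2 hsc)
  have hRlow : a / 4 * |s - c| ≤ R := hlow s hs
  have hR : 0 < R := lt_of_lt_of_le (by positivity) hRlow
  have hga : 0 ≤ C * (g a / a) := mul_nonneg hC (div_nonneg (hnn a ha.le) ha.le)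
  calc g R / R ≤ C * (g a / a) * (R / a) ^ (δ - 1) :=
        div_le_mul_rpow_of_le_rpow_mul ha hR (hgrowth R a hR (norm_segment_le P Q hs))
  _ ≤ C * (g a / a) * (|s - c| / 4) ^ (δ - 1) :=
    mul_le_mul_of_nonneg_left (Real.rpow_le_rpow_of_nonpos (by positivity)
      (by rw [le_div_iff₀ ha]; linarith) (by linarith)) hga
  _ ≤ C * (g a / a) * (4 * |s - c| ^ (δ - 1)) :=
    mul_le_mul_of_nonneg_left (rpow_sub_one_div_four_le hsc'.le hδ0) hga
  _ = 4 * C * (g a / a) * |s - c| ^ (δ - 1) := by ring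


theorem measurable_segment_div (hg : MonotoneOn g (Ici 0)) (P Q : E) :
    Measurable fun s : ℝ => g ‖s • P + (1 - s) • Q‖ / ‖s • P + (1 - s) • Q‖ := by
  have hR : Continuous fun s : ℝ => ‖s • P + (1 - s) • Q‖ := by fun_prop
  exact (hg.measurable_comp_of_nonneg hR.measurable fun _ => norm_nonneg _).div hR.measurable

theorem intervalIntegrable_segment_div (hg : MonotoneOn g (Ici 0))
    (hnn : ∀ t, 0 ≤ t → 0 ≤ g t) (hC : 0 ≤ C) (hδ0 : 0 < δ) (hδ1 : δ ≤ 1)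
    (hgrowth : ∀ r a, 0 < r → r ≤ a → g r ≤ C * (r / a) ^ δ * g a) (P Q : E)
    (ha : 0 < ‖P‖ + ‖Q‖) :
    IntervalIntegrable (fun s => g ‖s • P + (1 - s) • Q‖ / ‖s • P + (1 - s) • Q‖) volume 0 1 := by
  obtain ⟨c, -, hae⟩ := exists_ae_segment_le_abs_sub_rpow hnn hC hδ0.le hδ1 hgrowth P Q ha
  refine ((intervalIntegrable_abs_sub_rpow (r := δ - 1) (by linarith) c 0 1).const_mul
    (4 * C * (g (‖P‖ + ‖Q‖) / (‖P‖ + ‖Q‖)))).mono_fun'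
    (measurable_segment_div hg P Q).aestronglyMeasurable ?_
  rw [EventuallyLE, ae_restrict_iff' measurableSet_uIoc]
  filter_upwards [hae] with s hs hsI
  rw [uIoc_of_le zero_le_one] at hsI
  rw [Real.norm_eq_abs, abs_of_nonneg (div_nonneg (hnn _ (norm_nonneg _)) (norm_nonneg _))]
  exact hs (Ioc_subset_Icc_self hsI)

theorem integral_segment_div_le (hg : MonotoneOn g (Ici 0))
    (hnn : ∀ t, 0 ≤ t → 0 ≤ g t) (hC : 0 ≤ C) (hδ0 : 0 < δ) (hδ1 : δ ≤ 1)
    (hgrowth : ∀ r a, 0 < r → r ≤ a → g r ≤ C * (r / a) ^ δ * g a) (P Q : E)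
    (ha : 0 < ‖P‖ + ‖Q‖) :
    ∫ s in (0 : ℝ)..1, g ‖s • P + (1 - s) • Q‖ / ‖s • P + (1 - s) • Q‖ ≤
      8 * C / δ * (g (‖P‖ + ‖Q‖) / (‖P‖ + ‖Q‖)) := by
  set a := ‖P‖ + ‖Q‖
  obtain ⟨c, hc, hae⟩ := exists_ae_segment_le_abs_sub_rpow hnn hC hδ0.le hδ1 hgrowth P Q ha
  have hsing : ∫ s in (0 : ℝ)..1, |s - c| ^ (δ - 1) ≤ 2 / δ := by
    simpa using integral_abs_sub_rpow_le (r := δ - 1) (by linarith) hc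
  have hga : 0 ≤ 4 * C * (g a / a) := by have := hnn a ha.le; positivity
  calc ∫ s in (0 : ℝ)..1, g ‖s • P + (1 - s) • Q‖ / ‖s • P + (1 - s) • Q‖
      ≤ ∫ s in (0 : ℝ)..1, 4 * C * (g a / a) * |s - c| ^ (δ - 1) :=
        integral_mono_ae_restrict zero_le_one
          (intervalIntegrable_segment_div hg hnn hC hδ0 hδ1 hgrowth P Q ha)
          ((intervalIntegrable_abs_sub_rpow (r := δ - 1) (by linarith) c 0 1).const_mul _)
          ((ae_restrict_iff' measurableSet_Icc).2 hae)
  _ = 4 * C * (g a / a) * ∫ s in (0 : ℝ)..1, |s - c| ^ (δ - 1) := integral_const_mul _ _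
  _ ≤ 4 * C * (g a / a) * (2 / δ) := mul_le_mul_of_nonneg_left hsing hga
  _ = 8 * C / δ * (g a / a) := by ring

theorem le_integral_segment_div (hg : MonotoneOn g (Ici 0)) (hnn : ∀ t, 0 ≤ t → 0 ≤ g t)
    (P Q : E) (ha : 0 < ‖P‖ + ‖Q‖)
    (hint : IntervalIntegrable (fun s => g ‖s • P + (1 - s) • Q‖ / ‖s • P + (1 - s) • Q‖)
      volume 0 1) :
    g ((‖P‖ + ‖Q‖) / 4) / (4 * (‖P‖ + ‖Q‖)) ≤
      ∫ s in (0 : ℝ)..1, g ‖s • P + (1 - s) • Q‖ / ‖s • P + (1 - s) • Q‖ := by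
  set a := ‖P‖ + ‖Q‖
  obtain ⟨u, hu, hfar⟩ := exists_Icc_quarter_le_norm_segment P Q
  have hF : ∀ s ∈ Icc u (u + 1 / 4),
      g (a / 4) / a ≤ g ‖s • P + (1 - s) • Q‖ / ‖s • P + (1 - s) • Q‖ := fun s hs =>
    div_le_div₀ (hnn _ (norm_nonneg _)) (hg (show 0 ≤ a / 4 by positivity) (norm_nonneg _)
      (hfar s hs)) (lt_of_lt_of_le (by positivity) (hfar s hs))
      (norm_segment_le P Q ⟨hu.1.trans hs.1, by linarith [hs.2, hu.2]⟩)
  calc g (a / 4) / (4 * a) = ∫ _ in u..u + 1 / 4, g (a / 4) / a := by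
        rw [intervalIntegral.integral_const, smul_eq_mul]
        field_simp
        ring
  _ ≤ ∫ s in u..u + 1 / 4, g ‖s • P + (1 - s) • Q‖ / ‖s • P + (1 - s) • Q‖ :=
    integral_mono_on (by linarith) intervalIntegrable_const
      (hint.mono_set (by
        rw [uIcc_of_le (by linarith), uIcc_of_le zero_le_one]
        exact Icc_subset_Icc hu.1 (by linarith [hu.2]))) hF
  _ ≤ ∫ s in (0 : ℝ)..1, g ‖s • P + (1 - s) • Q‖ / ‖s • P + (1 - s) • Q‖ :=
    integral_mono_interval hu.1 (by linarith) (by linarith [hu.2])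
      (ae_of_all _ fun _ => div_nonneg (hnn _ (norm_nonneg _)) (norm_nonneg _)) hint

theorem mul_div_le_integral_segment_div (hg : MonotoneOn g (Ici 0))
    (hnn : ∀ t, 0 ≤ t → 0 ≤ g t) {D : ℝ} (hD : 0 < D) (hd : ∀ t > 0, g (2 * t) ≤ D * g t)
    (P Q : E) (ha : 0 < ‖P‖ + ‖Q‖)
    (hint : IntervalIntegrable (fun s => g ‖s • P + (1 - s) • Q‖ / ‖s • P + (1 - s) • Q‖)
      volume 0 1) :
    1 / (4 * D ^ 2) * (g (‖P‖ + ‖Q‖) / (‖P‖ + ‖Q‖)) ≤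
      ∫ s in (0 : ℝ)..1, g ‖s • P + (1 - s) • Q‖ / ‖s • P + (1 - s) • Q‖ := by
  set a := ‖P‖ + ‖Q‖
  have hquarter : g a ≤ D ^ 2 * g (a / 4) := by
    have := pow_mul_le_of_doubling hD.le hd 2 (by positivity : 0 < a / 4)
    rwa [show (2 : ℝ) ^ 2 * (a / 4) = a by ring] at this
  calc 1 / (4 * D ^ 2) * (g a / a) ≤ 1 / (4 * D ^ 2) * (D ^ 2 * g (a / 4) / a) := by gcongr
  _ = g (a / 4) / (4 * a) := by field_simp
  _ ≤ _ := le_integral_segment_div hg hnn P Q ha hint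

end SegmentAverage

/-- Average of `φ'(|·|)/|·|` over the segment `[P,Q]` is comparable to its value
at `|P| + |Q|` (Diening–Ettwein, Lemma 20). -/
theorem segment_average_equiv
    (n m : ℕ) (φ' : ℝ → ℝ) (cφ cψ : ℝ) (hN : IsNFunctionDeriv φ')
    (hΔ2 : ∀ t ≥ (0 : ℝ), phiOf φ' (2 * t) ≤ cφ * phiOf φ' t)
    (hΔ2conj : ∀ t ≥ (0 : ℝ), phiConj φ' (2 * t) ≤ cψ * phiConj φ' t) :
    ∃ c₁ > (0 : ℝ), ∃ c₂ > (0 : ℝ),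
      ∀ P Q : EuclideanSpace ℝ (Fin n × Fin m), ¬(P = 0 ∧ Q = 0) →
        c₁ * (φ' (‖P‖ + ‖Q‖) / (‖P‖ + ‖Q‖)) ≤
            (∫ s in (0 : ℝ)..1, φ' ‖s • P + (1 - s) • Q‖ / ‖s • P + (1 - s) • Q‖) ∧
          (∫ s in (0 : ℝ)..1, φ' ‖s • P + (1 - s) • Q‖ / ‖s • P + (1 - s) • Q‖) ≤
            c₂ * (φ' (‖P‖ + ‖Q‖) / (‖P‖ + ‖Q‖)) := by
  set D := max 1 (cφ ^ 2 / 2)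
  set K := max 2 (cψ ^ 2 / 2)
  have hD : 0 < D := zero_lt_one.trans_le (le_max_left _ _)
  have hK : 1 < K := one_lt_two.trans_le (le_max_left _ _)
  have hδ0 : 0 < Real.logb K 2 := Real.logb_pos hK one_lt_two
  have hδ1 : Real.logb K 2 ≤ 1 :=
    (Real.logb_le_iff_le_rpow hK two_pos).2 (by rw [Real.rpow_one]; exact le_max_left _ _)
  have hdφ : ∀ t > 0, φ' (2 * t) ≤ D * φ' t := fun t ht =>
    (hN.apply_two_mul_le hΔ2 ht).trans
      (mul_le_mul_of_nonneg_right (le_max_right _ _) (hN.nonneg ht.le))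
  have hdψ : ∀ u > 0, phiInvDeriv φ' (2 * u) ≤ K * phiInvDeriv φ' u := fun u hu =>
    (hN.phiInvDeriv_two_mul_le hΔ2conj hu).trans
      (mul_le_mul_of_nonneg_right (le_max_right _ _) (phiInvDeriv_nonneg φ' u))
  have hgrowth (r a : ℝ) (hr : 0 < r) (hra : r ≤ a) : φ' r ≤ 4 * (r / a) ^ Real.logb K 2 * φ' a :=
    hN.apply_le_rpow_mul hK hdψ hr hra
  have hnn : ∀ t, 0 ≤ t → 0 ≤ φ' t := fun _ => hN.nonneg
  refine ⟨1 / (4 * D ^ 2), by positivity, 8 * 4 / Real.logb K 2, by positivity,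
    fun P Q hPQ => ?_⟩
  have ha : 0 < ‖P‖ + ‖Q‖ := by
    rcases not_and_or.1 hPQ with h | h
    · exact add_pos_of_pos_of_nonneg (norm_pos_iff.2 h) (norm_nonneg Q)
    · exact add_pos_of_nonneg_of_pos (norm_nonneg P) (norm_pos_iff.2 h)
  exact ⟨mul_div_le_integral_segment_div hN.mono hnn hD hdφ P Q ha
      (intervalIntegrable_segment_div hN.mono hnn (by norm_num) hδ0 hδ1 hgrowth P Q ha),
    integral_segment_div_le hN.mono hnn (by norm_num) hδ0 hδ1 hgrowth P Q ha⟩
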